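/- arXiv:1212.1471 — 2 statements merged into one kernel-verified Lean document; each statement's English description precedes it below -/
import Mathlib

section
/- For an extended-path weight function φ (where φ((i, i+1)) = w_i ≥ 0 on path edges and φ = ∞, i.e., forbidden, on all other transpositions), the weighted transposition distance satisfies (1/2)·D_φ(π,σ) ≤ d_φ(π,σ) ≤ D_φ(π,σ), where D_φ(π,σ) = Σ_i w(π⁻¹(i) : σ⁻¹(i)) and w(k:l) is the sum of w_h for h between min(k,l) and max(k,l)−1. -/
open Equiv Finset

/-- The adjacent transposition swapping positions `i` and `i+1` (0-indexed);
identity if out of range. -/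
def adjSwap (n i : ℕ) : Equiv.Perm (Fin n) :=
  if h : i + 1 < n then Equiv.swap ⟨i, Nat.lt_of_succ_lt h⟩ ⟨i + 1, h⟩ else 1

/-- `ω` is between `π` and `σ`: on every pair `{a,b}`, `ω` agrees with `π` or with `σ`. -/
def Between {n : ℕ} (π ω σ : Equiv.Perm (Fin n)) : Prop :=
  ∀ a b : Fin n, (π⁻¹ a < π⁻¹ b ↔ ω⁻¹ a < ω⁻¹ b) ∨ (σ⁻¹ a < σ⁻¹ b ↔ ω⁻¹ a < ω⁻¹ b)

/-- Kendall tau distance: minimum number of adjacent transpositions transforming `π` into `σ`. -/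
noncomputable def kendall {n : ℕ} (π σ : Equiv.Perm (Fin n)) : ℕ :=
  sInf {s | ∃ l : List ℕ, (∀ i ∈ l, i + 1 < n) ∧
    σ = π * (l.map (adjSwap n)).prod ∧ l.length = s}

/-- The set of inversions between `π` and `σ` (each unordered pair `{i,j}` of disagreement
is recorded as the ordered pair `(i,j)` with `i` ranked before `j` by `π`). -/
def invSet {n : ℕ} (π σ : Equiv.Perm (Fin n)) : Finset (Fin n × Fin n) :=
  Finset.univ.filter fun p => π⁻¹ p.1 < π⁻¹ p.2 ∧ σ⁻¹ p.2 < σ⁻¹ p.1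

/-- Elements `j` on whose relative order with `i` the permutations `π` and `σ` disagree. -/
def invWith {n : ℕ} (π σ : Equiv.Perm (Fin n)) (i : Fin n) : Finset (Fin n) :=
  Finset.univ.filter fun j => ¬(π⁻¹ i < π⁻¹ j ↔ σ⁻¹ i < σ⁻¹ j)

/-- Weighted Kendall distance for weight function `φ` on adjacent transpositions
(`φ h` is the weight of swapping positions `h, h+1`, 0-indexed). -/
noncomputable def wKendall {n : ℕ} (φ : ℕ → ℝ) (π σ : Equiv.Perm (Fin n)) : ℝ :=
  sInf {w | ∃ l : List ℕ, (∀ i ∈ l, i + 1 < n) ∧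
    σ = π * (l.map (adjSwap n)).prod ∧ (l.map φ).sum = w}

/-- `w(k:l)`: sum of adjacent-transposition weights between positions `min k l` and `max k l - 1`. -/
def wsum (φ : ℕ → ℝ) (k l : ℕ) : ℝ := ∑ h ∈ Finset.Ico (min k l) (max k l), φ h

/-- The generalized (weighted) Spearman footrule `D_φ`. -/
noncomputable def DKendall {n : ℕ} (φ : ℕ → ℝ) (π σ : Equiv.Perm (Fin n)) : ℝ :=
  ∑ i : Fin n, wsum φ ((π⁻¹ i : Fin n) : ℕ) ((σ⁻¹ i : Fin n) : ℕ)

/-- Weighted transposition distance with weight function `φ` on transpositions. -/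
noncomputable def wTrans {n : ℕ} (φ : Fin n → Fin n → ℝ) (π σ : Equiv.Perm (Fin n)) : ℝ :=
  sInf {w | ∃ l : List (Fin n × Fin n), (∀ p ∈ l, p.1 ≠ p.2) ∧
    σ = π * (l.map fun p => Equiv.swap p.1 p.2).prod ∧
    (l.map fun p => φ p.1 p.2).sum = w}

/-- Weight of a path (as a list of vertices) in the complete graph `K_φ`. -/
def pathWt {n : ℕ} (φ : Fin n → Fin n → ℝ) (p : List (Fin n)) : ℝ :=
  ((p.zip p.tail).map fun q => φ q.1 q.2).sum

/-- `p` is a path from `a` to `b` (consecutive vertices distinct). -/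
def IsPath {n : ℕ} (p : List (Fin n)) (a b : Fin n) : Prop :=
  p.head? = some a ∧ p.getLast? = some b ∧ p.Chain' (· ≠ ·)

/-- Minimum weight of a path from `a` to `b` in `K_φ`. -/
noncomputable def minPathWt {n : ℕ} (φ : Fin n → Fin n → ℝ) (a b : Fin n) : ℝ :=
  sInf {w | ∃ p : List (Fin n), IsPath p a b ∧ pathWt φ p = w}

/-- The footrule-type lower/upper bounding function `D_φ` for transposition weights. -/
noncomputable def DTrans {n : ℕ} (φ : Fin n → Fin n → ℝ) (π σ : Equiv.Perm (Fin n)) : ℝ :=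
  ∑ i : Fin n, minPathWt φ (π⁻¹ i) (σ⁻¹ i)

/-!
Both bounds compare with the footrule `D_φ`, a left-invariant pseudometric on permutations with
`D_φ(1, s_h) ≤ 2 w_h` for the adjacent transposition `s_h`; by the triangle inequality every
sequence of adjacent transpositions from `π` to `σ` costs at least `D_φ(π, σ) / 2`.
Conversely, a permutation `ρ ≠ 1` has positions `i < j` with `ρ j ≤ i < j ≤ ρ i`. Exchanging
them lowers `D_φ(1, ρ)` by exactly `2 w(i:j)`, while `swap i j` is a product of adjacent
transpositions of total weight at most `2 w(i:j)`; induction on the displacement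
`∑ |x - ρ x|` produces a sequence of weight at most `D_φ(π, σ)`.
-/

section

variable {n : ℕ} {w : ℕ → ℝ}

@[simp] lemma wsum_self (w : ℕ → ℝ) (k : ℕ) : wsum w k k = 0 := by simp [wsum]

lemma wsum_comm (w : ℕ → ℝ) (k l : ℕ) : wsum w k l = wsum w l k := by
  rw [wsum, wsum, min_comm, max_comm]

lemma wsum_succ (w : ℕ → ℝ) (k : ℕ) : wsum w k (k + 1) = w k := by
  simp [wsum]

lemma wsum_add_wsum (w : ℕ → ℝ) {x y z : ℕ} (hxy : x ≤ y) (hyz : y ≤ z) :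
    wsum w x y + wsum w y z = wsum w x z := by
  simp only [wsum, min_eq_left hxy, max_eq_right hxy, min_eq_left hyz, max_eq_right hyz,
    min_eq_left (hxy.trans hyz), max_eq_right (hxy.trans hyz), sum_Ico_consecutive _ hxy hyz]

lemma wsum_eq_abs_sub (hw : ∀ i, 0 ≤ w i) (k l : ℕ) :
    wsum w k l = |∑ h ∈ range l, w h - ∑ h ∈ range k, w h| := by
  wlog hkl : k ≤ l generalizing k l
  · rw [wsum_comm, this l k (le_of_not_ge hkl), abs_sub_comm]
  have hmono : ∑ h ∈ range k, w h ≤ ∑ h ∈ range l, w h :=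
    sum_le_sum_of_subset_of_nonneg (range_subset_range.2 hkl) fun i _ _ => hw i
  rw [wsum, min_eq_left hkl, max_eq_right hkl, sum_Ico_eq_sub _ hkl,
    abs_of_nonneg (sub_nonneg.2 hmono)]

lemma wsum_triangle (hw : ∀ i, 0 ≤ w i) (x y z : ℕ) :
    wsum w x z ≤ wsum w x y + wsum w y z := by
  simp only [wsum_eq_abs_sub hw, abs_sub_comm (∑ h ∈ range _, w h) (∑ h ∈ range x, w h),
    abs_sub_comm (∑ h ∈ range z, w h)]
  exact abs_sub_le _ _ _

lemma DKendall_mul_left (w : ℕ → ℝ) (ρ π σ : Perm (Fin n)) :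
    DKendall w (ρ * π) (ρ * σ) = DKendall w π σ := by
  simp only [DKendall, mul_inv_rev, Perm.mul_apply]
  exact Equiv.sum_comp ρ⁻¹ fun v => wsum w (π⁻¹ v) (σ⁻¹ v)

lemma DKendall_eq_DKendall_one (w : ℕ → ℝ) (π σ : Perm (Fin n)) :
    DKendall w π σ = DKendall w 1 (π⁻¹ * σ) := by
  rw [← DKendall_mul_left w π⁻¹, inv_mul_cancel]

lemma DKendall_one_eq_sum (w : ℕ → ℝ) (ρ : Perm (Fin n)) :
    DKendall w 1 ρ = ∑ x : Fin n, wsum w x (ρ x) := by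
  rw [← DKendall_mul_left w ρ⁻¹, mul_one, inv_mul_cancel]
  simp [DKendall, wsum_comm w _ (ρ _)]

lemma DKendall_triangle (hw : ∀ i, 0 ≤ w i) (π ρ σ : Perm (Fin n)) :
    DKendall w π σ ≤ DKendall w π ρ + DKendall w ρ σ := by
  rw [DKendall, DKendall, DKendall, ← sum_add_distrib]
  exact sum_le_sum fun v _ => wsum_triangle hw _ _ _

lemma sum_dist_apply_eq_sum_dist_mul_swap_add {M : Type*} [AddCommMonoid M] {d : ℕ → ℕ → M}
    (hcomm : ∀ k l, d k l = d l k) (hadd : ∀ x y z, x ≤ y → y ≤ z → d x y + d y z = d x z)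
    {ρ : Perm (Fin n)} {i j : Fin n} (hij : i < j) (hi : j ≤ ρ i) (hj : ρ j ≤ i) :
    ∑ x : Fin n, d x (ρ x) = ∑ x : Fin n, d x ((ρ * swap i j) x) + 2 • d i j := by
  have hswap : ∑ x : Fin n, d x ((ρ * swap i j) x) = ∑ x : Fin n, d (swap i j x) (ρ x) := by
    rw [← Equiv.sum_comp (swap i j)]
    simp
  have hterm : ∀ x : Fin n, d x (ρ x) =
      d (swap i j x) (ρ x) + ((if x = i then d i j else 0) + if x = j then d i j else 0) := by
    intro x
    rcases eq_or_ne x i with rfl | hxi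
    · simp [hij.ne, ← hadd _ _ _ hij.le hi, add_comm]
    rcases eq_or_ne x j with rfl | hxj
    · simp [hxi, hcomm _ (ρ x), ← hadd _ _ _ hj hij.le]
    · simp [swap_apply_of_ne_of_ne hxi hxj, hxi, hxj]
  rw [hswap, two_nsmul, sum_congr rfl fun x _ => hterm x, sum_add_distrib, sum_add_distrib,
    sum_ite_eq', sum_ite_eq']
  simp

lemma DKendall_one_swap (w : ℕ → ℝ) {i j : Fin n} (hij : i < j) :
    DKendall w 1 (swap i j) = 2 * wsum w i j := by
  rw [DKendall_one_eq_sum, sum_dist_apply_eq_sum_dist_mul_swap_add (wsum_comm w)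
    (fun _ _ _ => wsum_add_wsum w) hij (by simp) (by simp), swap_mul_self]
  simp

lemma DKendall_one_adjSwap_le (hw : ∀ i, 0 ≤ w i) (h : ℕ) :
    DKendall w 1 (adjSwap n h) ≤ 2 * w h := by
  unfold adjSwap
  split_ifs
  · rw [DKendall_one_swap w (Fin.mk_lt_mk.2 h.lt_succ_self), wsum_succ]
  · simpa [DKendall] using hw h

lemma DKendall_one_prod_le (hw : ∀ i, 0 ≤ w i) (l : List ℕ) :
    DKendall w 1 (l.map (adjSwap n)).prod ≤ 2 * (l.map w).sum := by
  induction l with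
  | nil => simp [DKendall]
  | cons h t ih =>
    calc DKendall w 1 ((h :: t).map (adjSwap n)).prod
        ≤ DKendall w 1 (adjSwap n h) +
            DKendall w (adjSwap n h) (adjSwap n h * (t.map (adjSwap n)).prod) :=
          DKendall_triangle hw _ _ _
      _ ≤ 2 * w h + 2 * (t.map w).sum := by
          have hshift := DKendall_mul_left w (adjSwap n h) 1 (t.map (adjSwap n)).prod
          rw [mul_one] at hshift
          rw [hshift]
          exact add_le_add (DKendall_one_adjSwap_le hw h) ih
      _ = 2 * ((h :: t).map w).sum := by simp [mul_add]

/-- Adjacent transpositions realizing `swap i (i + k + 1)`, via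
`swap i (i + k + 2) = s * swap i (i + k + 1) * s` with `s = swap (i + k + 1) (i + k + 2)`. -/
def swapChain (i : ℕ) : ℕ → List ℕ
  | 0 => [i]
  | k + 1 => (i + k + 1) :: (swapChain i k ++ [i + k + 1])

lemma mem_swapChain {i k x : ℕ} (hx : x ∈ swapChain i k) : i ≤ x ∧ x ≤ i + k := by
  induction k with
  | zero => simp_all [swapChain]
  | succ k ih =>
    simp only [swapChain, List.mem_cons, List.mem_append, List.not_mem_nil, or_false] at hx
    rcases hx with rfl | hx | rfl
    · omega
    · have := ih hx
      omega
    · omega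

lemma sum_map_swapChain_le (hw : ∀ i, 0 ≤ w i) (i k : ℕ) :
    ((swapChain i k).map w).sum ≤ 2 * wsum w i (i + k + 1) := by
  induction k with
  | zero =>
    simp only [swapChain, List.map_cons, List.map_nil, List.sum_cons, List.sum_nil, add_zero,
      wsum_succ]
    linarith [hw i]
  | succ k ih =>
    rw [show i + (k + 1) + 1 = i + k + 1 + 1 by omega,
      ← wsum_add_wsum w (by omega : i ≤ i + k + 1) (Nat.le_succ _), wsum_succ]
    simp only [swapChain, List.map_cons, List.map_append, List.sum_cons, List.sum_append,
      List.map_nil, List.sum_nil]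
    linarith

lemma prod_map_adjSwap_swapChain (i k : ℕ) (h : i + k + 1 < n) :
    ((swapChain i k).map (adjSwap n)).prod = swap ⟨i, by omega⟩ ⟨i + k + 1, h⟩ := by
  induction k with
  | zero => simp [swapChain, adjSwap, h]
  | succ k ih =>
    have hs : adjSwap n (i + k + 1) = swap ⟨i + k + 1, by omega⟩ ⟨i + (k + 1) + 1, h⟩ := by
      simp only [adjSwap, dif_pos (show i + k + 1 + 1 < n by omega)]
      rfl
    simp only [swapChain, List.map_cons, List.map_append, List.prod_cons, List.prod_append,
      List.map_nil, List.prod_nil, mul_one, ih (by omega), hs]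
    rw [← mul_assoc, swap_mul_swap_mul_swap (by simp; omega) (by simp; omega), swap_comm]

lemma exists_lt_le_apply_of_apply_lt (ρ : Perm (Fin n)) {j : Fin n} (hj : ρ j < j) :
    ∃ i < j, j ≤ ρ i := by
  by_contra! hsmall
  have hmaps : ∀ x ∈ Iic j, ρ x ∈ Iio j := fun x hx =>
    mem_Iio.2 <| (mem_Iic.1 hx).lt_or_eq.elim (hsmall x) (· ▸ hj)
  have hcard := card_le_card_of_injOn ρ hmaps ρ.injective.injOn
  simp at hcard

lemma exists_crossing_pair {ρ : Perm (Fin n)} (hρ : ρ ≠ 1) :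
    ∃ i j, i < j ∧ j ≤ ρ i ∧ ρ j ≤ i := by
  obtain ⟨m, hm, hmin⟩ : ∃ m, ρ m ≠ m ∧ ∀ k, ρ k ≠ k → m ≤ k := by
    have hne : (univ.filter fun k => ρ k ≠ k).Nonempty := by
      by_contra! h
      exact hρ (Equiv.ext fun k => by simpa using filter_eq_empty_iff.1 h (mem_univ k))
    exact ⟨_, (mem_filter.1 (min'_mem _ hne)).2, fun k hk => min'_le _ _ (by simp [hk])⟩
  set j := ρ⁻¹ m
  have hρj : ρ j = m := ρ.apply_symm_apply m
  have hmj : m ≠ j := fun h => hm (by nth_rw 1 [h]; exact hρj)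
  have hjm : ρ j < j := hρj ▸ (hmin j (by rw [hρj]; exact hmj)).lt_of_ne hmj
  obtain ⟨i, hij, hi⟩ := exists_lt_le_apply_of_apply_lt ρ hjm
  exact ⟨i, j, hij, hi, hρj ▸ hmin i (hij.trans_le hi).ne'⟩

lemma exists_adjSwap_list_sum_le_DKendall (hw : ∀ i, 0 ≤ w i) (ρ : Perm (Fin n)) :
    ∃ l : List ℕ, (∀ i ∈ l, i + 1 < n) ∧ (l.map (adjSwap n)).prod = ρ ∧
      (l.map w).sum ≤ DKendall w 1 ρ := by
  induction hN : ∑ x : Fin n, Nat.dist x (ρ x) using Nat.strong_induction_on generalizing ρ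
    with | _ N ih =>
  rcases eq_or_ne ρ 1 with rfl | hρ
  · exact ⟨[], by simp, rfl, by simp [DKendall]⟩
  obtain ⟨i, j, hij, hi, hj⟩ := exists_crossing_pair hρ
  have hdrop {M : Type} [AddCommMonoid M] {d : ℕ → ℕ → M} (hcomm : ∀ k l, d k l = d l k)
      (hadd : ∀ x y z, x ≤ y → y ≤ z → d x y + d y z = d x z) :=
    sum_dist_apply_eq_sum_dist_mul_swap_add hcomm hadd hij hi hj
  have hdist := hdrop Nat.dist_comm fun x y z hxy hyz => by simp only [Nat.dist]; omega
  have hpos : 0 < Nat.dist i j := Nat.dist_pos_of_ne (Fin.val_ne_of_ne hij.ne)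
  obtain ⟨l, hl, hprod, hcost⟩ :=
    ih _ (by rw [← hN, hdist, smul_eq_mul]; omega) (ρ * swap i j) rfl
  obtain ⟨k, hk⟩ : ∃ k, (j : ℕ) = i + k + 1 := ⟨j - i - 1, by omega⟩
  refine ⟨l ++ swapChain i k, ?_, ?_, ?_⟩
  · intro x hx
    rcases List.mem_append.1 hx with hx | hx
    · exact hl x hx
    · have := mem_swapChain hx
      omega
  · rw [List.map_append, List.prod_append, hprod, prod_map_adjSwap_swapChain i k (hk ▸ j.2),
      mul_assoc]
    simp [← hk]
  · rw [DKendall_one_eq_sum, hdrop (wsum_comm w) fun _ _ _ => wsum_add_wsum w,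
      ← DKendall_one_eq_sum, two_nsmul, List.map_append, List.sum_append, hk]
    linarith [sum_map_swapChain_le hw i k]

end

theorem stmt17 (n : ℕ) (w : ℕ → ℝ) (hw : ∀ i, 0 ≤ w i) (π σ : Equiv.Perm (Fin n)) :
    (1 / 2) * DKendall w π σ ≤ wKendall w π σ ∧ wKendall w π σ ≤ DKendall w π σ := by
  obtain ⟨l₀, hl₀, hprod₀, hcost₀⟩ := exists_adjSwap_list_sum_le_DKendall hw (π⁻¹ * σ)
  have hmem : (l₀.map w).sum ∈ {x | ∃ l : List ℕ, (∀ i ∈ l, i + 1 < n) ∧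
      σ = π * (l.map (adjSwap n)).prod ∧ (l.map w).sum = x} :=
    ⟨l₀, hl₀, by rw [hprod₀, mul_inv_cancel_left], rfl⟩
  rw [wKendall, DKendall_eq_DKendall_one]
  constructor
  · refine le_csInf ⟨_, hmem⟩ ?_
    rintro _ ⟨l, -, rfl, rfl⟩
    rw [inv_mul_cancel_left]
    linarith [DKendall_one_prod_le (n := n) hw l]
  · refine (csInf_le ⟨0, ?_⟩ hmem).trans hcost₀
    rintro _ ⟨l, -, -, rfl⟩
    exact List.sum_nonneg (by simpa using fun i _ => hw i)
end

section
/- The expected weighted Kendall distance of a uniformly random permutation π in S_n from the identity, for a decreasing weight function φ, equals Σ_{s=1}^{n-1} φ((s, s+1))·(n−s)·(H_n − H_{n−s}), where H_k = Σ_{l=1}^k 1/l is the k-th harmonic number. In particular, taking φ ≡ 1 recovers E[K(π,e)] = (1/2)·C(n,2), and taking φ((s,s+1)) = n−s yields E[d_φ(π,e)] = (1/2)·C(n,2) + (2/3)·C(n,3). -/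
open Equiv Finset

/-- The `k`-th harmonic number. -/
noncomputable def harmonicNum (k : ℕ) : ℝ := ∑ l ∈ Finset.Icc 1 k, (1 : ℝ) / l

/-!
For nonnegative decreasing weights, the weighted Kendall distance of `π` from the identity is
`invWeight φ π`: each value `a` contributes `φ a + ⋯ + φ (n - 2 - e)`, where `e` counts the larger
values placed after `a`. Removing a descent at positions `h, h + 1` lowers `invWeight` by the weight
`φ (n - 2 - e)` of the value moving left, which is at most `φ h`, and creating a descent raises it,
so no sorting sequence is cheaper than `invWeight φ π`; moving the smallest misplaced value one step
to the left costs exactly the drop, so this bound is attained.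

For the mean, multiplying `π` on the left by the transposition `(a u)` turns `e` into the rank of
`u` among the values `≥ a`, ordered by position in `π`, so `e` is uniform on `{0, …, n - 1 - a}`.
Exchanging the order of summation in the resulting double sums produces the harmonic numbers.
-/

lemma Finset.sum_comp_card_filter_lt {α β M : Type*} [LinearOrder β] [AddCommMonoid M]
    (s : Finset α) {f : α → β} (hf : Set.InjOn f s) (G : ℕ → M) :
    ∑ u ∈ s, G #{k ∈ s | f u < f k} = ∑ e ∈ range #s, G e := by
  classical
  set r := fun u => #{k ∈ s | f u < f k}
  have hr : ∀ u ∈ s, ∀ v ∈ s, f u < f v → r v < r u := fun u _ v hv huv =>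
    card_lt_card <| (ssubset_iff_of_subset (monotone_filter_right _ fun _ _ => huv.trans)).2
      ⟨v, mem_filter.2 ⟨hv, huv⟩, by simp⟩
  have hinj : Set.InjOn r s := fun u hu v hv huv => by
    by_contra hne
    rcases (hf.ne hu hv hne).lt_or_gt with h | h
    · exact (hr u hu v hv h).ne huv.symm
    · exact (hr v hv u hu h).ne huv
  have himage : s.image r = range #s := by
    refine eq_of_subset_of_card_le (fun e he => ?_) (by rw [card_range, card_image_of_injOn hinj])
    obtain ⟨u, hu, rfl⟩ := mem_image.1 he
    exact mem_range.2 (card_lt_card (filter_ssubset.2 ⟨u, hu, lt_irrefl _⟩))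
  rw [← himage, sum_image hinj]

lemma Fin.swap_lt_swap_iff {n : ℕ} {i j p q : Fin n} (hij : (i : ℕ) + 1 = j)
    (h₁ : ¬(p = i ∧ q = j)) (h₂ : ¬(p = j ∧ q = i)) : swap i j p < swap i j q ↔ p < q := by
  simp only [swap_apply_def, Fin.ext_iff, Fin.lt_def] at *
  split_ifs <;> omega

lemma Finset.sum_range_sub_eq_sum_Icc {M : Type*} [AddCommMonoid M] (n : ℕ) (f : ℕ → M) :
    ∑ a ∈ range n, f (n - a) = ∑ m ∈ Icc 1 n, f m := by
  refine sum_nbij' (n - ·) (n - ·) ?_ ?_ ?_ ?_ fun _ _ => rfl <;> intro x hx <;>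
    simp only [mem_range, mem_Icc] at hx ⊢ <;> omega

lemma Finset.sum_Ico_sub_eq_sum_Ico {M : Type*} [AddCommMonoid M] (a n : ℕ) (f : ℕ → M) :
    ∑ j ∈ Ico a (n - 1), f (n - 1 - j) = ∑ t ∈ Ico 1 (n - a), f t := by
  refine sum_nbij' (n - 1 - ·) (n - 1 - ·) ?_ ?_ ?_ ?_ fun _ _ => rfl <;> intro x hx <;>
    simp only [mem_Ico] at hx ⊢ <;> omega

lemma Finset.sum_range_sum_Ico_sub {M : Type*} [AddCommMonoid M] (a n : ℕ) (f : ℕ → M) :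
    ∑ e ∈ range (n - a), ∑ j ∈ Ico a (n - 1 - e), f j = ∑ j ∈ Ico a (n - 1), (n - 1 - j) • f j := by
  rw [sum_comm' (t' := Ico a (n - 1)) (s' := fun j => range (n - 1 - j)) fun e j => by
    simp only [mem_range, mem_Ico]; omega]
  exact sum_congr rfl fun j _ => by rw [sum_const, card_range]

lemma harmonicNum_sub {n k : ℕ} (hk : k ≤ n) :
    harmonicNum n - harmonicNum (n - k) = ∑ a ∈ range k, 1 / ((n - a : ℕ) : ℝ) := by
  induction k with
  | zero => simp
  | succ k ih =>
    have hstep : harmonicNum (n - k) = harmonicNum (n - (k + 1)) + 1 / ((n - k : ℕ) : ℝ) := by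
      rw [harmonicNum, harmonicNum, show n - k = n - (k + 1) + 1 by omega,
        sum_Icc_succ_top (by omega)]
    rw [sum_range_succ, ← ih (by omega), hstep]
    ring

lemma Finset.sum_Ico_one_natCast (m : ℕ) : ∑ t ∈ Ico 1 m, (t : ℝ) = m * (m - 1) / 2 := by
  induction m with
  | zero => simp
  | succ m ih =>
    rcases m.eq_zero_or_pos with rfl | hm
    · simp
    · rw [sum_Ico_succ_top hm, ih]
      push_cast
      ring

lemma Finset.sum_Ico_one_natCast_mul_self (m : ℕ) :
    ∑ t ∈ Ico 1 m, (t : ℝ) * t = m * (m - 1) * (2 * m - 1) / 6 := by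
  induction m with
  | zero => simp
  | succ m ih =>
    rcases m.eq_zero_or_pos with rfl | hm
    · simp
    · rw [sum_Ico_succ_top hm, ih]
      push_cast
      ring

namespace Kendall

variable {n : ℕ}

def largerAfter (π : Perm (Fin n)) (a : Fin n) : ℕ :=
  #{k | a < k ∧ π⁻¹ a < π⁻¹ k}

/- In the paper's Algorithm FindTauMonotone the inversions `(b, a)` with `b > a` placed before `a`
get the weights `φ a, …, φ (n - 2 - largerAfter π a)` (0-indexed). -/
def invWeight (φ : ℕ → ℝ) (π : Perm (Fin n)) : ℝ :=
  ∑ a : Fin n, ∑ j ∈ Ico (a : ℕ) (n - 1 - largerAfter π a), φ j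

lemma card_filter_lt_inv_apply (π : Perm (Fin n)) (i : Fin n) :
    #{k | i < π⁻¹ k} = n - 1 - i := by
  rw [← Fin.card_Ioi]
  refine card_nbij' (π⁻¹ ·) (π ·) ?_ ?_ ?_ ?_ <;> intro k <;> simp

lemma largerAfter_le (π : Perm (Fin n)) (a : Fin n) : largerAfter π a ≤ n - 1 - a := by
  rw [← Fin.card_Ioi]
  exact card_le_card fun k hk => by simp_all

lemma largerAfter_apply_le (π : Perm (Fin n)) (i : Fin n) :
    largerAfter π (π i) ≤ n - 1 - i := by
  rw [← card_filter_lt_inv_apply π i, largerAfter]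
  exact card_le_card fun k hk => by simp_all

lemma largerAfter_one (a : Fin n) : largerAfter 1 a = n - 1 - a := by
  rw [← Fin.card_Ioi, largerAfter]
  congr 1; ext k; simp

lemma invWeight_one (φ : ℕ → ℝ) : invWeight φ (1 : Perm (Fin n)) = 0 := by
  refine sum_eq_zero fun a _ => ?_
  rw [largerAfter_one, Nat.sub_sub_self (by omega), Ico_self, sum_empty]

section Descent

variable {h : ℕ} (hn : h + 1 < n) {π : Perm (Fin n)}

lemma adjSwap_eq : adjSwap n h = swap ⟨h, by omega⟩ ⟨h + 1, hn⟩ := dif_pos hn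

lemma inv_mul_adjSwap_apply (k : Fin n) :
    (π * adjSwap n h)⁻¹ k = swap ⟨h, by omega⟩ ⟨h + 1, hn⟩ (π⁻¹ k) := by
  rw [adjSwap_eq hn, mul_inv_rev, swap_inv, Perm.mul_apply]

lemma largerAfter_mul_adjSwap (hdesc : π ⟨h + 1, hn⟩ < π ⟨h, by omega⟩) (a : Fin n) :
    largerAfter (π * adjSwap n h) a = largerAfter π a + if a = π ⟨h + 1, hn⟩ then 1 else 0 := by
  set i : Fin n := ⟨h, by omega⟩
  set j : Fin n := ⟨h + 1, hn⟩
  have hij : (i : ℕ) + 1 = j := rfl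
  simp only [largerAfter, inv_mul_adjSwap_apply hn]
  split_ifs with ha
  · subst ha
    rw [Perm.inv_eq_iff_eq.2 rfl, ← card_insert_of_notMem (a := π i)]
    · congr 1
      ext k
      simp only [mem_filter, mem_univ, true_and, mem_insert]
      by_cases hk : k = π i
      · subst hk
        rw [Perm.inv_eq_iff_eq.2 rfl, swap_apply_left, swap_apply_right]
        exact iff_of_true ⟨hdesc, Fin.lt_def.2 (by omega)⟩ (Or.inl rfl)
      · have hki : π⁻¹ k ≠ i := fun h' => hk (Perm.inv_eq_iff_eq.1 h')
        rw [or_iff_right hk]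
        refine and_congr_right fun _ => Fin.swap_lt_swap_iff hij ?_ fun h' => hki h'.2
        exact fun h' => by have := congrArg Fin.val h'.1; omega
    · simp only [mem_filter, mem_univ, true_and]
      rw [Perm.inv_eq_iff_eq.2 rfl]
      exact fun h' => by have := Fin.lt_def.1 h'.2; omega
  · rw [add_zero]
    congr 1
    ext k
    simp only [mem_filter, mem_univ, true_and]
    refine and_congr_right fun hak => Fin.swap_lt_swap_iff hij ?_ ?_
    · rintro ⟨hai, hkj⟩
      rw [Perm.inv_eq_iff_eq] at hai hkj
      exact lt_asymm (hai ▸ hkj ▸ hak) hdesc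
    · rintro ⟨haj, -⟩
      exact ha (Perm.inv_eq_iff_eq.1 haj)

lemma sum_largerAfter_mul_adjSwap (hdesc : π ⟨h + 1, hn⟩ < π ⟨h, by omega⟩) :
    ∑ a, largerAfter (π * adjSwap n h) a = ∑ a, largerAfter π a + 1 := by
  simp only [largerAfter_mul_adjSwap hn hdesc, sum_add_distrib, sum_ite_eq', mem_univ, if_true]

lemma invWeight_eq_add (hdesc : π ⟨h + 1, hn⟩ < π ⟨h, by omega⟩) (φ : ℕ → ℝ) :
    invWeight φ π = invWeight φ (π * adjSwap n h) + φ (n - 2 - largerAfter π (π ⟨h + 1, hn⟩)) := by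
  set y := π ⟨h + 1, hn⟩
  have hy : largerAfter (π * adjSwap n h) y = largerAfter π y + 1 := by
    rw [largerAfter_mul_adjSwap hn hdesc, if_pos rfl]
  have hbound := largerAfter_le (π * adjSwap n h) y
  have hrest : ∑ a ∈ univ.erase y, ∑ j ∈ Ico (a : ℕ) (n - 1 - largerAfter (π * adjSwap n h) a), φ j
      = ∑ a ∈ univ.erase y, ∑ j ∈ Ico (a : ℕ) (n - 1 - largerAfter π a), φ j :=
    sum_congr rfl fun a ha => by
      rw [largerAfter_mul_adjSwap hn hdesc, if_neg (ne_of_mem_erase ha), add_zero]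
  simp only [invWeight]
  rw [← add_sum_erase _ _ (mem_univ y), ← add_sum_erase _ _ (mem_univ y), hy, hrest,
    show n - 1 - largerAfter π y = n - 2 - largerAfter π y + 1 by omega,
    sum_Ico_succ_top (by omega),
    show n - 1 - (largerAfter π y + 1) = n - 2 - largerAfter π y by omega]
  ring

end Descent

lemma invWeight_le_sum_map {φ : ℕ → ℝ} (hφ : ∀ i < n - 1, 0 ≤ φ i)
    (hanti : AntitoneOn φ (Set.Iio (n - 1))) {l : List ℕ} (hl : ∀ i ∈ l, i + 1 < n)
    {π : Perm (Fin n)} (hπ : π * (l.map (adjSwap n)).prod = 1) :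
    invWeight φ π ≤ (l.map φ).sum := by
  induction l generalizing π with
  | nil => simp_all [invWeight_one]
  | cons h l ih =>
    have hn := hl h List.mem_cons_self
    have ih := ih (fun i hi => hl i (List.mem_cons_of_mem _ hi)) (π := π * adjSwap n h)
      (by simpa [mul_assoc] using hπ)
    rw [List.map_cons, List.sum_cons]
    have hne : (⟨h + 1, hn⟩ : Fin n) ≠ ⟨h, by omega⟩ := by simp
    rcases lt_or_gt_of_ne (π.injective.ne hne) with hdesc | hasc
    · have hle := largerAfter_apply_le π ⟨h + 1, hn⟩
      have : φ (n - 2 - largerAfter π (π ⟨h + 1, hn⟩)) ≤ φ h :=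
        hanti (Set.mem_Iio.2 (by omega)) (Set.mem_Iio.2 (by omega)) (by simp at hle; omega)
      linarith [invWeight_eq_add hn hdesc φ]
    · have hdesc : (π * adjSwap n h) ⟨h + 1, hn⟩ < (π * adjSwap n h) ⟨h, by omega⟩ := by
        simpa [adjSwap_eq hn] using hasc
      have := invWeight_eq_add hn hdesc φ
      rw [mul_assoc, adjSwap_eq hn, swap_mul_self, mul_one, ← adjSwap_eq hn] at this
      linarith [hφ h (by omega), hφ (n - 2 - largerAfter (π * adjSwap n h)
        ((π * adjSwap n h) ⟨h + 1, hn⟩)) (by omega)]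

/- The descent that moves the smallest value `v` not at its own place one step to the left: values
below `v` are fixed, so every entry after `v` is larger than `v`. -/
lemma exists_descent_largerAfter_eq {π : Perm (Fin n)} (hπ : π ≠ 1) :
    ∃ h, ∃ hn : h + 1 < n, π ⟨h + 1, hn⟩ < π ⟨h, by omega⟩ ∧
      largerAfter π (π ⟨h + 1, hn⟩) = n - 2 - h := by
  have hsupp : π.support.Nonempty := nonempty_iff_ne_empty.2 (mt Perm.support_eq_empty_iff.1 hπ)
  set v := π.support.min' hsupp
  have hfixed : ∀ u < v, π u = u := fun u hu =>
    by_contra fun h' => (π.support.min'_le u (Perm.mem_support.2 h')).not_gt hu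
  set p := π⁻¹ v
  have hpv : π p = v := by simp [p]
  have hvp : v < p := by
    rcases lt_trichotomy p v with hlt | heq | hgt
    · exact absurd (hfixed _ hlt) (by rw [hpv]; exact hlt.ne')
    · exact (Perm.mem_support.1 (π.support.min'_mem hsupp) (by simpa [heq] using hpv)).elim
    · exact hgt
  have hlarger : ∀ j, v ≤ j → j ≠ p → v < π j := by
    intro j hvj hjp
    rcases lt_trichotomy (π j) v with hlt | heq | hgt
    · have := π.injective (hfixed _ hlt)
      exact absurd (this ▸ hlt) hvj.not_gt
    · exact absurd (Perm.eq_inv_iff_eq.2 heq) hjp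
    · exact hgt
  have hp : ((p : ℕ) - 1) + 1 = p := by have := Fin.lt_def.1 hvp; omega
  refine ⟨p - 1, by omega, ?_, ?_⟩
  · rw [show (⟨p - 1 + 1, _⟩ : Fin n) = p from Fin.ext hp, hpv]
    exact hlarger _ (Fin.le_def.2 (by have := Fin.lt_def.1 hvp; simp; omega))
      (fun h' => by have := congrArg Fin.val h'; simp at this; omega)
  · rw [show (⟨p - 1 + 1, _⟩ : Fin n) = p from Fin.ext hp, hpv, largerAfter,
      show n - 2 - (p - 1) = n - 1 - p by omega, ← card_filter_lt_inv_apply π p]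
    congr 1
    ext k
    simp only [mem_filter, mem_univ, true_and]
    exact ⟨And.right, fun hk => ⟨by simpa using hlarger _ (hvp.trans hk).le hk.ne', hk⟩⟩

lemma exists_sorting_list (π : Perm (Fin n)) :
    ∃ l : List ℕ, (∀ i ∈ l, i + 1 < n) ∧ π * (l.map (adjSwap n)).prod = 1 ∧
      ∀ φ, (l.map φ).sum = invWeight φ π := by
  have hbound : ∀ σ : Perm (Fin n), ∑ a, largerAfter σ a ≤ ∑ a : Fin n, (n - 1 - a) :=
    fun σ => sum_le_sum fun a _ => largerAfter_le σ a
  generalize hN : ∑ a : Fin n, (n - 1 - a) - ∑ a, largerAfter π a = N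
  induction N using Nat.strong_induction_on generalizing π with
  | _ N ih =>
    by_cases hπ : π = 1
    · exact ⟨[], by simp, by simp [hπ], fun φ => by simp [hπ, invWeight_one]⟩
    obtain ⟨h, hn, hdesc, heq⟩ := exists_descent_largerAfter_eq hπ
    have hsum := sum_largerAfter_mul_adjSwap hn hdesc
    have := hbound (π * adjSwap n h)
    obtain ⟨l, hl, hsort, hw⟩ := ih _ (by omega) (π * adjSwap n h) rfl
    refine ⟨h :: l, ?_, by simpa [mul_assoc] using hsort, fun φ => ?_⟩
    · simpa [hn] using hl
    · rw [List.map_cons, List.sum_cons, hw, invWeight_eq_add hn hdesc, heq,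
        Nat.sub_sub_self (by omega)]
      ring

lemma wKendall_eq_invWeight {φ : ℕ → ℝ} (hφ : ∀ i < n - 1, 0 ≤ φ i)
    (hanti : AntitoneOn φ (Set.Iio (n - 1))) (π : Perm (Fin n)) :
    wKendall φ π 1 = invWeight φ π := by
  obtain ⟨l, hl, hsort, hw⟩ := exists_sorting_list π
  have hlower : invWeight φ π ∈ lowerBounds {w | ∃ l : List ℕ, (∀ i ∈ l, i + 1 < n) ∧
      1 = π * (l.map (adjSwap n)).prod ∧ (l.map φ).sum = w} := by
    rintro _ ⟨l', hl', hsort', rfl⟩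
    exact invWeight_le_sum_map hφ hanti hl' hsort'.symm
  have hmem := (⟨l, hl, hsort.symm, hw φ⟩ : ∃ l : List ℕ, (∀ i ∈ l, i + 1 < n) ∧
      1 = π * (l.map (adjSwap n)).prod ∧ (l.map φ).sum = invWeight φ π)
  exact le_antisymm (csInf_le ⟨_, hlower⟩ hmem) (le_csInf ⟨_, hmem⟩ hlower)

lemma kendall_eq_invWeight (π : Perm (Fin n)) :
    (kendall π 1 : ℝ) = invWeight (fun _ => 1) π := by
  obtain ⟨l, hl, hsort, hw⟩ := exists_sorting_list π
  have hlength (l' : List ℕ) : (l'.map fun _ => (1 : ℝ)).sum = l'.length := by simp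
  have hmin : l.length ∈ lowerBounds {s | ∃ l : List ℕ, (∀ i ∈ l, i + 1 < n) ∧
      1 = π * (l.map (adjSwap n)).prod ∧ l.length = s} := by
    rintro _ ⟨l', hl', hsort', rfl⟩
    have := invWeight_le_sum_map (φ := fun _ => 1) (fun _ _ => zero_le_one)
      (fun _ _ _ _ _ => le_rfl) hl' hsort'.symm
    rw [← hw, hlength, hlength] at this
    exact_mod_cast this
  have hk : kendall π 1 = l.length :=
    le_antisymm (Nat.sInf_le ⟨l, hl, hsort.symm, rfl⟩) (le_csInf ⟨_, l, hl, hsort.symm, rfl⟩ hmin)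
  rw [← hw, hlength, hk]

lemma largerAfter_swap_mul (π : Perm (Fin n)) {a u : Fin n} (hau : a ≤ u) :
    largerAfter (swap a u * π) a = #{k ∈ Ici a | π⁻¹ u < π⁻¹ k} := by
  have hinv : ∀ k, (swap a u * π)⁻¹ k = π⁻¹ (swap a u k) := fun k => by
    rw [mul_inv_rev, swap_inv, Perm.mul_apply]
  simp only [largerAfter, hinv, swap_apply_left]
  refine card_nbij' (swap a u) (swap a u) ?_ ?_ (fun k _ => swap_apply_self ..)
    (fun k _ => swap_apply_self ..) <;> intro k hk <;>
    simp only [coe_filter, mem_univ, true_and, mem_Ici, swap_apply_self, Set.mem_ofPred_eq] at hk ⊢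
  · refine ⟨?_, hk.2⟩
    rw [swap_apply_def]
    split_ifs with hka
    · exact absurd hka hk.1.ne'
    · exact le_rfl
    · exact hk.1.le
  · refine ⟨?_, hk.2⟩
    rw [swap_apply_def]
    split_ifs with hka hku
    · subst hka
      exact lt_of_le_of_ne hau fun h => (h ▸ hk.2).false
    · exact absurd (hku ▸ hk.2) (lt_irrefl _)
    · exact lt_of_le_of_ne hk.1 (Ne.symm hka)

lemma card_smul_sum_largerAfter {M : Type*} [AddCommMonoid M] (a : Fin n) (G : ℕ → M) :
    (n - a) • ∑ π : Perm (Fin n), G (largerAfter π a) = n.factorial • ∑ e ∈ range (n - a), G e := by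
  calc (n - a) • ∑ π : Perm (Fin n), G (largerAfter π a)
      = ∑ u ∈ Ici a, ∑ π : Perm (Fin n), G (largerAfter (swap a u * π) a) := by
        rw [eq_comm, ← Fin.card_Ici, ← sum_const]
        exact sum_congr rfl fun u _ =>
          Equiv.sum_comp (Equiv.mulLeft (swap a u)) fun π => G (largerAfter π a)
    _ = ∑ π : Perm (Fin n), ∑ u ∈ Ici a, G #{k ∈ Ici a | π⁻¹ u < π⁻¹ k} := by
        rw [sum_comm]
        exact sum_congr rfl fun π _ => sum_congr rfl fun u hu => by
          rw [largerAfter_swap_mul π (mem_Ici.1 hu)]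
    _ = n.factorial • ∑ e ∈ range (n - a), G e := by
        rw [sum_congr rfl fun π _ => sum_comp_card_filter_lt _ (π⁻¹).injective.injOn G,
          Fin.card_Ici, sum_const, card_univ, Fintype.card_perm, Fintype.card_fin]

/- The term of `a` is the average over `e ∈ range (n - a)` of `∑ j ∈ Ico a (n - 1 - e), φ j`. -/
noncomputable def avgInvWeight (n : ℕ) (φ : ℕ → ℝ) : ℝ :=
  ∑ a ∈ range n, (∑ j ∈ Ico a (n - 1), ((n - 1 - j : ℕ) : ℝ) * φ j) / (n - a : ℕ)

lemma sum_invWeight (φ : ℕ → ℝ) :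
    ∑ π : Perm (Fin n), invWeight φ π = n.factorial * avgInvWeight n φ := by
  have hmean (a : Fin n) : ∑ π : Perm (Fin n), ∑ j ∈ Ico (a : ℕ) (n - 1 - largerAfter π a), φ j =
      n.factorial * ((∑ j ∈ Ico (a : ℕ) (n - 1), ((n - 1 - j : ℕ) : ℝ) * φ j) / (n - a : ℕ)) := by
    have hpos : ((n - a : ℕ) : ℝ) ≠ 0 := Nat.cast_ne_zero.2 (by have := a.isLt; omega)
    have := card_smul_sum_largerAfter a fun e => ∑ j ∈ Ico (a : ℕ) (n - 1 - e), φ j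
    simp only [sum_range_sum_Ico_sub, nsmul_eq_mul] at this
    rw [mul_div_assoc', eq_div_iff hpos, mul_comm, this]
  simp only [invWeight]
  rw [sum_comm, sum_congr rfl fun a _ => hmean a, ← mul_sum, avgInvWeight,
    Fin.sum_univ_eq_sum_range (fun a => (∑ j ∈ Ico a (n - 1), ((n - 1 - j : ℕ) : ℝ) * φ j) /
      (n - a : ℕ))]

lemma avgInvWeight_eq_harmonic (φ : ℕ → ℝ) :
    avgInvWeight n φ = ∑ s ∈ Icc 1 (n - 1),
      φ (s - 1) * ((n : ℝ) - s) * (harmonicNum n - harmonicNum (n - s)) := by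
  simp only [avgInvWeight, sum_div]
  rw [sum_comm' (t' := range (n - 1)) (s' := fun j => range (j + 1)) fun a j => by
    simp only [mem_range, mem_Ico]; omega]
  have hterm : ∀ j ∈ range (n - 1), ∑ a ∈ range (j + 1), ((n - 1 - j : ℕ) : ℝ) * φ j / (n - a : ℕ)
      = φ (j + 1 - 1) * ((n : ℝ) - (j + 1 : ℕ)) *
        (harmonicNum n - harmonicNum (n - (j + 1))) := fun j hj => by
    have hj : j + 1 ≤ n := by simp only [mem_range] at hj; omega
    rw [Nat.add_sub_cancel, harmonicNum_sub hj, mul_sum]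
    refine sum_congr rfl fun a _ => ?_
    rw [show n - 1 - j = n - (j + 1) by omega, Nat.cast_sub hj]
    ring
  refine sum_nbij' (· + 1) (· - 1) ?_ ?_ ?_ ?_ hterm <;> intro x hx <;>
    simp only [mem_range, mem_Icc] at hx ⊢ <;> omega

lemma avgInvWeight_one : avgInvWeight n (fun _ => 1) = 1 / 2 * (n.choose 2 : ℝ) := by
  have hinner (a : ℕ) :
      ∑ j ∈ Ico a (n - 1), ((n - 1 - j : ℕ) : ℝ) * 1 = ∑ t ∈ Ico 1 (n - a), (t : ℝ) := by
    simpa using sum_Ico_sub_eq_sum_Ico a n fun t => (t : ℝ)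
  simp only [avgInvWeight, hinner]
  rw [sum_range_sub_eq_sum_Icc n fun m => (∑ t ∈ Ico 1 m, (t : ℝ)) / m]
  clear hinner
  induction n with
  | zero => simp
  | succ n ih =>
    rw [sum_Icc_succ_top (by omega), ih, sum_Ico_one_natCast, Nat.choose_succ_succ,
      Nat.choose_one_right]
    push_cast
    field_simp
    ring

lemma avgInvWeight_sub :
    avgInvWeight n (fun h => (n : ℝ) - h - 1) =
      1 / 2 * (n.choose 2 : ℝ) + 2 / 3 * (n.choose 3 : ℝ) := by
  have hinner (a : ℕ) : ∑ j ∈ Ico a (n - 1), ((n - 1 - j : ℕ) : ℝ) * ((n : ℝ) - j - 1) =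
      ∑ t ∈ Ico 1 (n - a), (t : ℝ) * t := by
    rw [← sum_Ico_sub_eq_sum_Ico a n fun t => (t : ℝ) * t]
    refine sum_congr rfl fun j hj => ?_
    rw [mem_Ico] at hj
    rw [Nat.cast_sub (by omega : j ≤ n - 1), Nat.cast_sub (by omega : 1 ≤ n)]
    ring
  simp only [avgInvWeight, hinner]
  rw [sum_range_sub_eq_sum_Icc n fun m => (∑ t ∈ Ico 1 m, (t : ℝ) * t) / m]
  clear hinner
  induction n with
  | zero => simp
  | succ n ih =>
    rw [sum_Icc_succ_top (by omega), ih, sum_Ico_one_natCast_mul_self, Nat.choose_succ_succ,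
      Nat.choose_succ_succ n 2, Nat.choose_one_right]
    push_cast [Nat.cast_choose_two]
    field_simp
    ring

end Kendall

theorem stmt19 (n : ℕ) (φ : ℕ → ℝ)
    (hφ0 : ∀ i, 0 ≤ φ i) (hdec : ∀ i j, j ≤ i → φ i ≤ φ j) :
    (∑ π : Equiv.Perm (Fin n), wKendall φ π 1) / (n.factorial : ℝ) =
      ∑ s ∈ Finset.Icc 1 (n - 1),
        φ (s - 1) * ((n : ℝ) - s) * (harmonicNum n - harmonicNum (n - s)) ∧
    (∑ π : Equiv.Perm (Fin n), ((kendall π 1 : ℕ) : ℝ)) / (n.factorial : ℝ) =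
      (1 / 2) * (n.choose 2 : ℝ) ∧
    (∑ π : Equiv.Perm (Fin n), wKendall (fun h => (n : ℝ) - h - 1) π 1) / (n.factorial : ℝ) =
      (1 / 2) * (n.choose 2 : ℝ) + (2 / 3) * (n.choose 3 : ℝ) := by
  have hmean (ψ : ℕ → ℝ) :
      (∑ π : Perm (Fin n), Kendall.invWeight ψ π) / n.factorial = Kendall.avgInvWeight n ψ := by
    rw [Kendall.sum_invWeight, mul_div_cancel_left₀ _ (Nat.cast_ne_zero.2 n.factorial_ne_zero)]
  refine ⟨?_, ?_, ?_⟩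
  · simp_rw [Kendall.wKendall_eq_invWeight (fun i _ => hφ0 i) fun i _ j _ hij => hdec j i hij]
    rw [hmean, Kendall.avgInvWeight_eq_harmonic]
  · simp_rw [Kendall.kendall_eq_invWeight]
    rw [hmean, Kendall.avgInvWeight_one]
  · have hnonneg : ∀ i < n - 1, 0 ≤ (n : ℝ) - i - 1 := fun i hi => by
      have : (i : ℝ) + 1 ≤ n := by exact_mod_cast (by omega : i + 1 ≤ n)
      linarith
    have hanti : AntitoneOn (fun h : ℕ => (n : ℝ) - h - 1) (Set.Iio (n - 1)) :=
      fun i _ j _ hij => by simp only; gcongr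
    simp_rw [Kendall.wKendall_eq_invWeight hnonneg hanti]
    rw [hmean, Kendall.avgInvWeight_sub]
end
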